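/- arXiv:1007.2091 — 2 statements merged into one kernel-verified Lean document; each statement's English description precedes it below -/
import Mathlib

section
/- If f : Ω → ℝⁿ is continuous and monotone on an open set Ω ⊆ ℝⁿ (each component attains its supremum and infimum over any closed ball inside Ω on the boundary sphere of that ball), then for every ball B(x,r) with closure in Ω and every t ∈ (r, 2r) with B(x,2r) ⊆ Ω, one has diam f(B(x,r)) ≤ ∑_{i=1}^n osc_{S(x,t)} f_i, where S(x,t) is the sphere of radius t about x. -/
/-!
Since `B̄(x, t) ⊆ Ω`, monotonicity says that each `f i` has the same oscillation on the sphere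
`S(x, t)` as on the closed ball `B̄(x, t) ⊇ B(x, r)`, which is finite by continuity. Hence two values
of `f` on `B(x, r)` differ in the `i`-th coordinate by at most `osc_{S(x,t)} f i`, and the Euclidean
distance is bounded by the sum of the coordinate distances.
-/

open Metric

theorem PiLp.norm_le_sum_norm {p : ENNReal} [Fact (1 ≤ p)] {ι : Type*} [Fintype ι]
    {β : ι → Type*} [∀ i, SeminormedAddCommGroup (β i)] (x : PiLp p β) :
    ‖x‖ ≤ ∑ i, ‖x i‖ := by
  classical
  calc ‖x‖ = ‖∑ i, PiLp.single p i (x i)‖ := by congr 1; ext j; simp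
    _ ≤ ∑ i, ‖PiLp.single p i (x i)‖ := norm_sum_le _ _
    _ = ∑ i, ‖x i‖ := by simp only [PiLp.norm_single]

theorem PiLp.dist_le_sum_dist {p : ENNReal} [Fact (1 ≤ p)] {ι : Type*} [Fintype ι]
    {β : ι → Type*} [∀ i, SeminormedAddCommGroup (β i)] (x y : PiLp p β) :
    dist x y ≤ ∑ i, dist (x i) (y i) := by
  simpa only [dist_eq_norm, PiLp.sub_apply] using PiLp.norm_le_sum_norm (x - y)

noncomputable def osc {α : Type*} (g : α → ℝ) (A : Set α) : ℝ := sSup (g '' A) - sInf (g '' A)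

theorem dist_le_osc {α : Type*} {g : α → ℝ} {A : Set α} (hA : Bornology.IsBounded (g '' A))
    {a b : α} (ha : a ∈ A) (hb : b ∈ A) : dist (g a) (g b) ≤ osc g A :=
  Real.dist_le_of_mem_Icc (hA.subset_Icc_sInf_sSup ⟨a, ha, rfl⟩)
    (hA.subset_Icc_sInf_sSup ⟨b, hb, rfl⟩)

theorem diam_image_le_sum_osc {α ι : Type*} [Fintype ι] {p : ENNReal} [Fact (1 ≤ p)]
    {f : α → PiLp p (fun _ : ι => ℝ)}
    {s K : Set α} (hsK : s ⊆ K) (hK : K.Nonempty)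
    (hbdd : ∀ i, Bornology.IsBounded ((fun y => f y i) '' K)) :
    diam (f '' s) ≤ ∑ i, osc (fun y => f y i) K := by
  obtain ⟨k, hk⟩ := hK
  have hosc_nonneg : ∀ i, 0 ≤ osc (fun y => f y i) K :=
    fun i => dist_nonneg.trans (dist_le_osc (hbdd i) hk hk)
  refine diam_le_of_forall_dist_le (Finset.sum_nonneg fun i _ => hosc_nonneg i) ?_
  rintro _ ⟨u, hu, rfl⟩ _ ⟨v, hv, rfl⟩
  exact (PiLp.dist_le_sum_dist _ _).trans
    (Finset.sum_le_sum fun i _ => dist_le_osc (hbdd i) (hsK hu) (hsK hv))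

theorem stmt_10_general (n : ℕ) (Ω : Set (EuclideanSpace ℝ (Fin n)))
    (f : EuclideanSpace ℝ (Fin n) → EuclideanSpace ℝ (Fin n))
    (hf : ContinuousOn f Ω)
    (hmono : ∀ i : Fin n, ∀ z : EuclideanSpace ℝ (Fin n), ∀ R : ℝ, 0 < R →
      Metric.closedBall z R ⊆ Ω →
      sSup ((fun y => f y i) '' Metric.sphere z R) =
        sSup ((fun y => f y i) '' Metric.closedBall z R) ∧
      sInf ((fun y => f y i) '' Metric.sphere z R) =
        sInf ((fun y => f y i) '' Metric.closedBall z R))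
    (x : EuclideanSpace ℝ (Fin n)) (r t : ℝ) (hr : 0 < r)
    (ht1 : r < t) (ht2 : t < 2 * r)
    (hball : Metric.closedBall x (2 * r) ⊆ Ω) :
    Metric.diam (f '' Metric.ball x r) ≤
      ∑ i : Fin n, (sSup ((fun y => f y i) '' Metric.sphere x t) -
        sInf ((fun y => f y i) '' Metric.sphere x t)) := by
  have htpos : 0 < t := hr.trans ht1
  have hKΩ : closedBall x t ⊆ Ω := (closedBall_subset_closedBall ht2.le).trans hball
  have hosc_sphere : ∀ i,
      osc (fun y => f y i) (sphere x t) = osc (fun y => f y i) (closedBall x t) := fun i => by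
    rw [osc, osc, (hmono i x t htpos hKΩ).1, (hmono i x t htpos hKΩ).2]
  have hfK : ContinuousOn f (closedBall x t) := hf.mono hKΩ
  have hbdd : ∀ i, Bornology.IsBounded ((fun y => f y i) '' closedBall x t) := fun i =>
    ((isCompact_closedBall x t).image_of_continuousOn (by fun_prop)).isBounded
  calc diam (f '' ball x r)
      ≤ ∑ i, osc (fun y => f y i) (closedBall x t) :=
        diam_image_le_sum_osc ((ball_subset_ball ht1.le).trans ball_subset_closedBall)
          (nonempty_closedBall.2 htpos.le) hbdd
    _ = ∑ i, osc (fun y => f y i) (sphere x t) := by simp only [hosc_sphere]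

theorem stmt_10 (n : ℕ) (Ω : Set (EuclideanSpace ℝ (Fin n))) (hΩ : IsOpen Ω)
    (f : EuclideanSpace ℝ (Fin n) → EuclideanSpace ℝ (Fin n))
    (hf : ContinuousOn f Ω)
    (hmono : ∀ i : Fin n, ∀ z : EuclideanSpace ℝ (Fin n), ∀ R : ℝ, 0 < R →
      Metric.closedBall z R ⊆ Ω →
      sSup ((fun y => f y i) '' Metric.sphere z R) =
        sSup ((fun y => f y i) '' Metric.closedBall z R) ∧
      sInf ((fun y => f y i) '' Metric.sphere z R) =
        sInf ((fun y => f y i) '' Metric.closedBall z R))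
    (x : EuclideanSpace ℝ (Fin n)) (r t : ℝ) (hr : 0 < r)
    (ht1 : r < t) (ht2 : t < 2 * r)
    (hball : Metric.closedBall x (2 * r) ⊆ Ω) :
    Metric.diam (f '' Metric.ball x r) ≤
      ∑ i : Fin n, (sSup ((fun y => f y i) '' Metric.sphere x t) -
        sInf ((fun y => f y i) '' Metric.sphere x t)) :=
  stmt_10_general n Ω f hf hmono x r t hr ht1 ht2 hball
end

section
/- Let Ω ⊆ ℝⁿ be a cube, p > 1, A : [0,∞) → [0,∞) increasing, and Φ(t) = A(t) t^p. Then there exists a constant C > 0 depending only on n and p such that for every nonnegative integrable h : Ω → [0,∞), ∫_Ω Φ(M_Ω h) ≤ C ∫_Ω Φ(C h), where M_Ω h(x) = sup { (1/|Q|) ∫_Q h : x ∈ Q ⊆ Ω, Q a subcube } is the local maximal operator. -/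
open MeasureTheory

/-- The closed axis-parallel cube with center `c` and half-side `s`. -/
def cube {n : ℕ} (c : EuclideanSpace ℝ (Fin n)) (s : ℝ) :
    Set (EuclideanSpace ℝ (Fin n)) :=
  {y | ∀ i, |y i - c i| ≤ s}

/-- The local maximal operator over subcubes of `Ω`. -/
noncomputable def maxOp {n : ℕ} (Ω : Set (EuclideanSpace ℝ (Fin n)))
    (h : EuclideanSpace ℝ (Fin n) → ENNReal) (x : EuclideanSpace ℝ (Fin n)) :
    ENNReal :=
  ⨆ (z : EuclideanSpace ℝ (Fin n)) (s : ℝ) (_ : 0 < s) (_ : x ∈ cube z s)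
    (_ : cube z s ⊆ Ω), (∫⁻ y in cube z s, h y) / volume (cube z s)

/-!
Each subcube of half-side `s` through `x` lies in a ball about `x` of radius `r < 3 √n s`, so
`M_Ω h ≤ (3 √n)ⁿ · M (1_Ω h)` for the centred maximal function `M` over balls. Splitting `g` at
height `t / 4` and applying the Vitali weak `(1, 1)` bound gives
`t · |{2 M g > t}| ≤ 4ⁿ⁺¹ ∫_{4 g > t} g`. As `A` is increasing, `A(u) uᵖ ≤ ∫₀^{2u} A(t) d(tᵖ)`;
integrating this against the distribution estimate and exchanging the integrals leaves
`∫ g(y) ∫₀^{4 g(y)} A(t) p tᵖ⁻² dt dy ≤ p / (p - 1) · ∫ A(4 g) (4 g)ᵖ`.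
-/

open Set Metric Module
open scoped ENNReal

lemma lintegral_Ioo_ofReal_mul_rpow {q : ℝ} (hq : -1 < q) {a b : ℝ} (ha : 0 ≤ a) (hab : a ≤ b) :
    ∫⁻ t in Ioo a b, ENNReal.ofReal ((q + 1) * t ^ q) =
      ENNReal.ofReal (b ^ (q + 1) - a ^ (q + 1)) := by
  have hint : IntegrableOn (fun t : ℝ => (q + 1) * t ^ q) (Ioc a b) := by
    have := intervalIntegral.intervalIntegrable_rpow' (a := a) (b := b) hq
    exact ((intervalIntegrable_iff_integrableOn_Ioc_of_le hab).1 this).const_mul _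
  rw [← ofReal_integral_eq_lintegral_ofReal (hint.mono_set Ioo_subset_Ioc_self)]
  · rw [← integral_Ioc_eq_integral_Ioo, ← intervalIntegral.integral_of_le hab,
      intervalIntegral.integral_const_mul, integral_rpow (Or.inl hq),
      mul_div_cancel₀ _ (by linarith : q + 1 ≠ 0)]
  · filter_upwards [self_mem_ae_restrict measurableSet_Ioo] with t ht
    have := Real.rpow_nonneg (ha.trans ht.1.le) q
    have : 0 < q + 1 := by linarith
    positivity

lemma setLIntegral_Ioi_ite_ofReal_lt {T : ℝ≥0∞} (hT : T ≠ ⊤) (F : ℝ → ℝ≥0∞) :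
    ∫⁻ t in Ioi 0, (if ENNReal.ofReal t < T then F t else 0) = ∫⁻ t in Ioo 0 T.toReal, F t := by
  rw [← Ioi_inter_Iio, inter_comm, ← Measure.restrict_restrict measurableSet_Iio,
    ← lintegral_indicator measurableSet_Iio]
  refine setLIntegral_congr_fun measurableSet_Ioi fun t ht => ?_
  simp only [indicator, mem_Iio, ENNReal.ofReal_lt_iff_lt_toReal (le_of_lt ht) hT]

lemma Monotone.mul_rpow {A : ℝ≥0∞ → ℝ≥0∞} (hA : Monotone A) {p : ℝ} (hp : 0 ≤ p) :
    Monotone fun u => A u * u ^ p :=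
  fun _ _ h => mul_le_mul' (hA h) (ENNReal.rpow_le_rpow h hp)

lemma ENNReal.rpow_sub_one_mul_le_rpow {x y : ℝ≥0∞} (hxy : x ≤ y) {p : ℝ} (hp : 1 ≤ p) :
    y ^ (p - 1) * x ≤ y ^ p :=
  calc y ^ (p - 1) * x ≤ y ^ (p - 1) * y ^ (1 : ℝ) := by rw [ENNReal.rpow_one]; gcongr
    _ = y ^ p := by rw [← ENNReal.rpow_add_of_nonneg _ _ (by linarith) zero_le_one, sub_add_cancel]

lemma ENNReal.ofReal_mul_rpow_sub_one {p t : ℝ} (hp : 0 ≤ p) (ht : 0 < t) :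
    ENNReal.ofReal (p * t ^ (p - 1)) = ENNReal.ofReal (p * t ^ (p - 2)) * ENNReal.ofReal t := by
  rw [← ENNReal.ofReal_mul (by have := Real.rpow_nonneg ht.le (p - 2); positivity), mul_assoc,
    ← Real.rpow_add_one ht.ne']
  ring_nf

/-- Since `A` is increasing, `A u * u ^ p` is controlled by `∫_u^{2u} A(t) d(t^p)`. -/
lemma mul_rpow_le_setLIntegral {A : ℝ≥0∞ → ℝ≥0∞} (hA : Monotone A) {p : ℝ} (hp : 1 ≤ p)
    {u : ℝ≥0∞} (hu : u ≠ ⊤) :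
    A u * u ^ p ≤ ∫⁻ t in Ioi 0,
      if ENNReal.ofReal t < 2 * u then A (ENNReal.ofReal t) * ENNReal.ofReal (p * t ^ (p - 1))
      else 0 := by
  rcases eq_or_ne u 0 with rfl | hu0
  · simp [ENNReal.zero_rpow_of_pos (by linarith : 0 < p)]
  set a := u.toReal
  have ha : 0 < a := ENNReal.toReal_pos hu0 hu
  have hua : u = ENNReal.ofReal a := (ENNReal.ofReal_toReal hu).symm
  have h2u : (2 * u).toReal = 2 * a := by simp [ENNReal.toReal_mul, a]
  rw [setLIntegral_Ioi_ite_ofReal_lt (ENNReal.mul_ne_top (by simp) hu), h2u]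
  have h2p : 2 ≤ (2 : ℝ) ^ p := by
    simpa using Real.rpow_le_rpow_of_exponent_le (by norm_num : (1 : ℝ) ≤ 2) hp
  calc A u * u ^ p ≤ A u * ENNReal.ofReal ((2 * a) ^ p - a ^ p) := by
        rw [hua, ENNReal.ofReal_rpow_of_pos ha, Real.mul_rpow zero_le_two ha.le]
        gcongr
        nlinarith [Real.rpow_nonneg ha.le p]
    _ = ∫⁻ t in Ioo a (2 * a), A u * ENNReal.ofReal (p * t ^ (p - 1)) := by
        rw [lintegral_const_mul _ (by fun_prop)]
        congr 1
        simpa using (lintegral_Ioo_ofReal_mul_rpow (q := p - 1) (by linarith) ha.le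
          (by linarith : a ≤ 2 * a)).symm
    _ ≤ ∫⁻ t in Ioo a (2 * a), A (ENNReal.ofReal t) * ENNReal.ofReal (p * t ^ (p - 1)) := by
        refine setLIntegral_mono' measurableSet_Ioo fun t ht => ?_
        gcongr
        exact hA (hua ▸ ENNReal.ofReal_le_ofReal ht.1.le)
    _ ≤ _ := lintegral_mono_set (Ioo_subset_Ioo_left ha.le)

lemma setLIntegral_ite_le_mul_rpow {A : ℝ≥0∞ → ℝ≥0∞} (hA : Monotone A) {p : ℝ} (hp : 1 < p)
    {T : ℝ≥0∞} (hT : T ≠ ⊤) :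
    ∫⁻ t in Ioi 0,
      (if ENNReal.ofReal t < T then A (ENNReal.ofReal t) * ENNReal.ofReal (p * t ^ (p - 2))
      else 0) ≤ ENNReal.ofReal (p / (p - 1)) * (A T * T ^ (p - 1)) := by
  rw [setLIntegral_Ioi_ite_ofReal_lt hT]
  set b := T.toReal
  have hp1 : 0 < p - 1 := by linarith
  have hpow : ∀ t : ℝ, p * t ^ (p - 2) = p / (p - 1) * ((p - 2 + 1) * t ^ (p - 2)) := by
    intro t
    rw [show p - 2 + 1 = p - 1 by ring]
    field_simp
  calc ∫⁻ t in Ioo 0 b, A (ENNReal.ofReal t) * ENNReal.ofReal (p * t ^ (p - 2))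
      ≤ ∫⁻ t in Ioo 0 b, A T * ENNReal.ofReal (p * t ^ (p - 2)) := by
        refine setLIntegral_mono' measurableSet_Ioo fun t ht => ?_
        gcongr
        exact hA ((ENNReal.ofReal_le_ofReal ht.2.le).trans ENNReal.ofReal_toReal_le)
    _ = A T * (ENNReal.ofReal (p / (p - 1)) * ENNReal.ofReal (b ^ (p - 1))) := by
        simp_rw [hpow, ENNReal.ofReal_mul (div_pos (by linarith) hp1).le]
        rw [lintegral_const_mul _ (by fun_prop), lintegral_const_mul _ (by fun_prop),
          lintegral_Ioo_ofReal_mul_rpow (by linarith) le_rfl ENNReal.toReal_nonneg,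
          show p - 2 + 1 = p - 1 by ring, Real.zero_rpow hp1.ne', sub_zero]
    _ ≤ ENNReal.ofReal (p / (p - 1)) * (A T * T ^ (p - 1)) := by
        rw [mul_left_comm]
        gcongr
        rw [← ENNReal.ofReal_toReal hT, ENNReal.ofReal_rpow_of_nonneg ENNReal.toReal_nonneg hp1.le]

section LayerCake

variable {α : Type*} [MeasurableSpace α] {μ : Measure α} [SFinite μ]
  {A : ℝ≥0∞ → ℝ≥0∞} {p : ℝ}

lemma lintegral_mul_rpow_le_setLIntegral_measure (hA : Monotone A) (hp : 1 ≤ p)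
    {F : α → ℝ≥0∞} (hF : Measurable F) (hF_fin : ∀ᵐ x ∂μ, F x ≠ ⊤) :
    ∫⁻ x, A (F x) * F x ^ p ∂μ ≤ ∫⁻ t in Ioi 0,
      A (ENNReal.ofReal t) * ENNReal.ofReal (p * t ^ (p - 1)) *
        μ {x | ENNReal.ofReal t < 2 * F x} := by
  have hmeas : Measurable (Function.uncurry fun (x : α) (t : ℝ) =>
      if ENNReal.ofReal t < 2 * F x then A (ENNReal.ofReal t) * ENNReal.ofReal (p * t ^ (p - 1))
      else 0) :=
    Measurable.ite (measurableSet_lt (by fun_prop) (by fun_prop))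
      ((hA.measurable.comp (by fun_prop)).mul (by fun_prop)) measurable_const
  calc ∫⁻ x, A (F x) * F x ^ p ∂μ
      ≤ ∫⁻ x, (∫⁻ t in Ioi 0, if ENNReal.ofReal t < 2 * F x then
          A (ENNReal.ofReal t) * ENNReal.ofReal (p * t ^ (p - 1)) else 0) ∂μ :=
        lintegral_mono_ae (hF_fin.mono fun x hx => mul_rpow_le_setLIntegral hA hp hx)
    _ = ∫⁻ t in Ioi 0, ∫⁻ x, (if ENNReal.ofReal t < 2 * F x then
          A (ENNReal.ofReal t) * ENNReal.ofReal (p * t ^ (p - 1)) else 0) ∂μ :=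
        lintegral_lintegral_swap hmeas.aemeasurable
    _ = _ := by
        refine lintegral_congr fun t => ?_
        rw [← lintegral_indicator_const (measurableSet_lt measurable_const (by fun_prop))]
        simp [indicator_apply]

lemma setLIntegral_mul_lintegral_indicator_le (hA : Monotone A) (hp : 1 < p)
    {g : α → ℝ≥0∞} (hg : Measurable g) (hg_fin : ∀ᵐ y ∂μ, g y ≠ ⊤) {c : ℝ≥0∞} (hc : c ≠ ⊤) :
    ∫⁻ t in Ioi 0, A (ENNReal.ofReal t) * ENNReal.ofReal (p * t ^ (p - 2)) *
        ∫⁻ y, {y | ENNReal.ofReal t < c * g y}.indicator g y ∂μ ≤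
      ENNReal.ofReal (p / (p - 1)) * ∫⁻ y, A (c * g y) * (c * g y) ^ (p - 1) * g y ∂μ := by
  set G : ℝ → α → ℝ≥0∞ := fun t y =>
    if ENNReal.ofReal t < c * g y then A (ENNReal.ofReal t) * ENNReal.ofReal (p * t ^ (p - 2))
    else 0
  have hG : Measurable (Function.uncurry G) :=
    Measurable.ite (measurableSet_lt (by fun_prop) (by fun_prop))
      ((hA.measurable.comp (by fun_prop)).mul (by fun_prop)) measurable_const
  calc ∫⁻ t in Ioi 0, A (ENNReal.ofReal t) * ENNReal.ofReal (p * t ^ (p - 2)) *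
        ∫⁻ y, {y | ENNReal.ofReal t < c * g y}.indicator g y ∂μ
      = ∫⁻ t in Ioi 0, ∫⁻ y, G t y * g y ∂μ := by
        refine lintegral_congr fun t => ?_
        rw [← lintegral_const_mul _ (hg.indicator (measurableSet_lt (by fun_prop) (by fun_prop)))]
        refine lintegral_congr fun y => ?_
        by_cases hy : ENNReal.ofReal t < c * g y <;> simp [G, hy]
    _ = ∫⁻ y, (∫⁻ t in Ioi 0, G t y) * g y ∂μ := by
        rw [lintegral_lintegral_swap (hG.mul (hg.comp measurable_snd)).aemeasurable]
        refine lintegral_congr fun y => ?_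
        exact lintegral_mul_const _ (hG.comp measurable_prodMk_right)
    _ ≤ ∫⁻ y, ENNReal.ofReal (p / (p - 1)) * (A (c * g y) * (c * g y) ^ (p - 1)) * g y ∂μ :=
        lintegral_mono_ae <| hg_fin.mono fun y hy =>
          mul_le_mul_left (setLIntegral_ite_le_mul_rpow hA hp (ENNReal.mul_ne_top hc hy)) _
    _ = _ := by
        rw [← lintegral_const_mul' _ _ ENNReal.ofReal_ne_top]
        simp only [mul_assoc]

end LayerCake

section MetricMeasureSpace

variable {X : Type*} [PseudoMetricSpace X] [MeasurableSpace X]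

/-- Rational radii make the supremum countable, hence measurable in `x`. -/
noncomputable def ballMaximal (μ : Measure X) (f : X → ℝ≥0∞) (x : X) : ℝ≥0∞ :=
  ⨆ (r : ℚ) (_ : 0 < r), (∫⁻ y in closedBall x r, f y ∂μ) / μ (closedBall x r)

variable {μ : Measure X}

lemma ballMaximal_mono {f g : X → ℝ≥0∞} (h : f ≤ g) (x : X) :
    ballMaximal μ f x ≤ ballMaximal μ g x := by
  unfold ballMaximal
  gcongr
  exact h _

lemma ballMaximal_add_le {f g : X → ℝ≥0∞} (hf : Measurable f) (x : X) :
    ballMaximal μ (f + g) x ≤ ballMaximal μ f x + ballMaximal μ g x := by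
  refine iSup₂_le fun r hr => ?_
  rw [Pi.add_def, lintegral_add_left hf, ENNReal.add_div]
  exact add_le_add (le_iSup₂_of_le r hr le_rfl) (le_iSup₂_of_le r hr le_rfl)

lemma ballMaximal_le_of_le {f : X → ℝ≥0∞} {c : ℝ≥0∞} (h : ∀ y, f y ≤ c) (x : X) :
    ballMaximal μ f x ≤ c :=
  iSup₂_le fun _ _ => ENNReal.div_le_of_le_mul <| (lintegral_mono h).trans_eq
    (setLIntegral_const _ _)

lemma ballMaximal_const_mul {f : X → ℝ≥0∞} (hf : Measurable f) (c : ℝ≥0∞) (x : X) :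
    ballMaximal μ (fun y => c * f y) x = c * ballMaximal μ f x := by
  simp only [ballMaximal, lintegral_const_mul c hf, mul_div_assoc, ENNReal.mul_iSup]

lemma exists_rat_lt_mul_measure_closedBall {f : X → ℝ≥0∞} {l : ℝ≥0∞} {x : X}
    (hx : l < ballMaximal μ f x) :
    ∃ r : ℚ, 0 < r ∧ l * μ (closedBall x r) < ∫⁻ y in closedBall x r, f y ∂μ := by
  obtain ⟨r, hx⟩ := lt_iSup_iff.1 hx
  obtain ⟨hr, hlt⟩ := lt_iSup_iff.1 hx
  exact ⟨r, hr, ENNReal.mul_lt_of_lt_div hlt⟩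

end MetricMeasureSpace

section HaarMeasure

variable {E : Type*} [NormedAddCommGroup E] [NormedSpace ℝ E] [FiniteDimensional ℝ E]
  [MeasurableSpace E] [BorelSpace E] {μ : Measure E} [μ.IsAddHaarMeasure]

lemma measure_closedBall_mul (x y : E) {k r : ℝ} (hk : 0 ≤ k) (hr : 0 ≤ r) :
    μ (closedBall x (k * r)) = ENNReal.ofReal (k ^ finrank ℝ E) * μ (closedBall y r) := by
  rw [Measure.addHaar_closedBall_mul μ x hk hr, Measure.addHaar_closedBall_center μ y]

lemma measurable_ballMaximal {f : E → ℝ≥0∞} (hf : Measurable f) :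
    Measurable (ballMaximal μ f) := by
  refine Measurable.iSup fun r => Measurable.iSup fun _ => Measurable.div ?_ ?_
  · have hS : MeasurableSet {q : E × E | dist q.2 q.1 ≤ r} :=
      measurableSet_le (by fun_prop) measurable_const
    convert ((hf.comp measurable_snd).indicator hS).lintegral_prod_right' (ν := μ) using 1
    funext x
    rw [← lintegral_indicator measurableSet_closedBall]
    rfl
  · simp_rw [fun x : E => Measure.addHaar_closedBall_center μ x (r : ℝ)]
    exact measurable_const

lemma le_max_of_mul_measure_closedBall_le [Nontrivial E] {l I : ℝ≥0∞} (hl : l ≠ 0) (hI : I ≠ ⊤)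
    {x : E} {r : ℝ} (hr : 0 ≤ r) (h : l * μ (closedBall x r) ≤ I) :
    r ≤ max 1 (I / (l * μ (ball 0 1))).toReal := by
  have hlB : l * μ (ball (0 : E) 1) ≠ 0 := mul_ne_zero hl (measure_ball_pos μ 0 one_pos).ne'
  have hpow : r ^ finrank ℝ E ≤ (I / (l * μ (ball 0 1))).toReal := by
    rw [← ENNReal.ofReal_le_iff_le_toReal (ENNReal.div_ne_top hI hlB),
      ENNReal.le_div_iff_mul_le (Or.inl hlB) (Or.inr hI)]
    rw [Measure.addHaar_closedBall μ x hr] at h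
    calc ENNReal.ofReal (r ^ finrank ℝ E) * (l * μ (ball 0 1))
        = l * (ENNReal.ofReal (r ^ finrank ℝ E) * μ (ball 0 1)) := by ring
      _ ≤ I := h
  rcases le_or_gt r 1 with h1 | h1
  · exact le_max_of_le_left h1
  · exact le_max_of_le_right ((le_self_pow₀ h1.le finrank_pos.ne').trans hpow)

/-- The weak type `(1, 1)` inequality, via the Vitali covering lemma. -/
theorem mul_measure_lt_ballMaximal_le [Nontrivial E] {f : E → ℝ≥0∞} (hf : ∫⁻ y, f y ∂μ ≠ ⊤)
    (l : ℝ≥0∞) : l * μ {x | l < ballMaximal μ f x} ≤ 4 ^ finrank ℝ E * ∫⁻ y, f y ∂μ := by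
  rcases eq_or_ne l 0 with rfl | hl
  · simp
  set S := {x | l < ballMaximal μ f x}
  choose! r hr_pos hr_avg using fun x (hx : x ∈ S) => exists_rat_lt_mul_measure_closedBall hx
  have hr_pos' : ∀ x ∈ S, (0 : ℝ) < r x := fun x hx => by exact_mod_cast hr_pos x hx
  have hr_le : ∀ x ∈ S, (r x : ℝ) ≤ max 1 ((∫⁻ y, f y ∂μ) / (l * μ (ball 0 1))).toReal :=
    fun x hx => le_max_of_mul_measure_closedBall_le hl hf (hr_pos' x hx).le
      ((hr_avg x hx).le.trans (setLIntegral_le_lintegral _ _))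
  obtain ⟨u, huS, hdisj, hcov⟩ :=
    Vitali.exists_disjoint_subfamily_covering_enlargement_closedBall S id (fun x => (r x : ℝ))
      _ hr_le 4 (by norm_num)
  simp only [id] at hdisj hcov
  have hu : u.Countable := hdisj.countable_of_nonempty_interior fun b hb =>
    ⟨b, mem_interior_iff_mem_nhds.2 (closedBall_mem_nhds b (hr_pos' b (huS hb)))⟩
  have hSu : S ⊆ ⋃ b ∈ u, closedBall b (4 * r b) := fun x hx => by
    obtain ⟨b, hb, hsub⟩ := hcov x hx
    exact mem_biUnion hb (hsub (mem_closedBall_self (hr_pos' x hx).le))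
  have h4 : (4 : ℝ≥0∞) ^ finrank ℝ E = ENNReal.ofReal (4 ^ finrank ℝ E) := by
    rw [ENNReal.ofReal_pow (by norm_num), ENNReal.ofReal_ofNat]
  calc l * μ S ≤ l * ∑' b : u, μ (closedBall b (4 * r b)) :=
        mul_le_mul_right ((measure_mono hSu).trans (measure_biUnion_le μ hu _)) l
    _ = 4 ^ finrank ℝ E * ∑' b : u, l * μ (closedBall b (r b)) := by
        rw [← ENNReal.tsum_mul_left, ← ENNReal.tsum_mul_left]
        refine tsum_congr fun b => ?_
        rw [measure_closedBall_mul _ _ (by norm_num) (hr_pos' b (huS b.2)).le, ← h4]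
        ring
    _ ≤ 4 ^ finrank ℝ E * ∑' b : u, ∫⁻ y in closedBall b (r b), f y ∂μ := by
        gcongr with b
        exact (hr_avg b (huS b.2)).le
    _ ≤ 4 ^ finrank ℝ E * ∫⁻ y, f y ∂μ := by
        rw [← lintegral_biUnion hu (fun _ _ => measurableSet_closedBall) hdisj]
        exact mul_le_mul_right (setLIntegral_le_lintegral _ _) _

lemma ae_ballMaximal_ne_top [Nontrivial E] {f : E → ℝ≥0∞} (hf : ∫⁻ y, f y ∂μ ≠ ⊤) :
    ∀ᵐ x ∂μ, ballMaximal μ f x ≠ ⊤ := by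
  set T := {x | ballMaximal μ f x = ⊤}
  have hT : ∀ m : ℕ, (m : ℝ≥0∞) * μ T ≤ 4 ^ finrank ℝ E * ∫⁻ y, f y ∂μ := fun m =>
    (mul_le_mul_right (measure_mono fun x (hx : _ = ⊤) => show _ < _ from
      hx ▸ ENNReal.natCast_lt_top m) _).trans (mul_measure_lt_ballMaximal_le hf m)
  have htop := le_of_tendsto' (ENNReal.Tendsto.mul_const ENNReal.tendsto_nat_nhds_top
    (Or.inl ENNReal.top_ne_zero)) hT
  have hT0 : μ T = 0 := by
    by_contra hT0
    rw [ENNReal.top_mul hT0, top_le_iff] at htop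
    exact ENNReal.mul_ne_top (by simp) hf htop
  exact measure_eq_zero_iff_ae_notMem.1 hT0

/-- Split `g` at height `l / 4`: the part below has maximal function at most `l / 4`, so only
the part above matters. -/
lemma mul_measure_lt_two_mul_ballMaximal_le [Nontrivial E] {g : E → ℝ≥0∞} (hg : Measurable g)
    (hfin : ∫⁻ y, g y ∂μ ≠ ⊤) (l : ℝ≥0∞) :
    l * μ {x | l < 2 * ballMaximal μ g x} ≤
      4 ^ (finrank ℝ E + 1) * ∫⁻ y, {y | l < 4 * g y}.indicator g y ∂μ := by
  set a := l / 4
  have hla : l = 4 * a := (ENNReal.mul_div_cancel (by norm_num) (by norm_num)).symm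
  set g₂ := {y | l < 4 * g y}.indicator g
  have hsplit : g ≤ (fun y => min (g y) a) + g₂ := fun y => by
    by_cases hy : l < 4 * g y
    · simp [g₂, hy]
    · have : g y ≤ a := by
        rw [ENNReal.le_div_iff_mul_le (by simp) (by simp), mul_comm]
        exact not_lt.1 hy
      simp [g₂, hy, this]
  have hsub : {x | l < 2 * ballMaximal μ g x} ⊆ {x | a < ballMaximal μ g₂ x} := fun x hx => by
    by_contra h
    have hle : ballMaximal μ g x ≤ a + a :=
      (ballMaximal_mono hsplit x).trans <| (ballMaximal_add_le (hg.min measurable_const) x).trans <|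
        add_le_add (ballMaximal_le_of_le (fun y => min_le_right _ _) x) (not_lt.1 h)
    have : l < 4 * a := hx.trans_le <| by
      calc 2 * ballMaximal μ g x ≤ 2 * (a + a) := by gcongr
        _ = 4 * a := by ring
    exact this.ne hla
  have hfin₂ : ∫⁻ y, g₂ y ∂μ ≠ ⊤ :=
    ne_top_of_le_ne_top hfin (lintegral_mono (indicator_le_self _ _))
  calc l * μ {x | l < 2 * ballMaximal μ g x} ≤ 4 * (a * μ {x | a < ballMaximal μ g₂ x}) := by
        nth_rewrite 1 [hla]
        rw [mul_assoc]
        exact mul_le_mul_right (mul_le_mul_right (measure_mono hsub) a) 4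
    _ ≤ 4 * (4 ^ finrank ℝ E * ∫⁻ y, g₂ y ∂μ) :=
        mul_le_mul_right (mul_measure_lt_ballMaximal_le hfin₂ a) 4
    _ = 4 ^ (finrank ℝ E + 1) * ∫⁻ y, g₂ y ∂μ := by ring

theorem lintegral_ballMaximal_mul_rpow_le [Nontrivial E] {A : ℝ≥0∞ → ℝ≥0∞} (hA : Monotone A)
    {p : ℝ} (hp : 1 < p) {g : E → ℝ≥0∞} (hg : Measurable g) (hfin : ∫⁻ y, g y ∂μ ≠ ⊤) :
    ∫⁻ x, A (ballMaximal μ g x) * ballMaximal μ g x ^ p ∂μ ≤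
      4 ^ (finrank ℝ E + 1) * ENNReal.ofReal (p / (p - 1)) *
        ∫⁻ y, A (4 * g y) * (4 * g y) ^ p ∂μ := by
  set K : ℝ≥0∞ := 4 ^ (finrank ℝ E + 1)
  have hstep : ∀ t ∈ Ioi (0 : ℝ),
      A (ENNReal.ofReal t) * ENNReal.ofReal (p * t ^ (p - 1)) *
        μ {x | ENNReal.ofReal t < 2 * ballMaximal μ g x} ≤
      K * (A (ENNReal.ofReal t) * ENNReal.ofReal (p * t ^ (p - 2)) *
        ∫⁻ y, {y | ENNReal.ofReal t < 4 * g y}.indicator g y ∂μ) := fun t ht => by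
    rw [ENNReal.ofReal_mul_rpow_sub_one (by linarith) ht]
    convert mul_le_mul_right (mul_measure_lt_two_mul_ballMaximal_le hg hfin (ENNReal.ofReal t))
      (A (ENNReal.ofReal t) * ENNReal.ofReal (p * t ^ (p - 2))) using 1 <;> ring
  calc ∫⁻ x, A (ballMaximal μ g x) * ballMaximal μ g x ^ p ∂μ
      ≤ ∫⁻ t in Ioi 0, A (ENNReal.ofReal t) * ENNReal.ofReal (p * t ^ (p - 1)) *
          μ {x | ENNReal.ofReal t < 2 * ballMaximal μ g x} :=
        lintegral_mul_rpow_le_setLIntegral_measure hA hp.le (measurable_ballMaximal hg)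
          (ae_ballMaximal_ne_top hfin)
    _ ≤ K * ∫⁻ t in Ioi 0, A (ENNReal.ofReal t) * ENNReal.ofReal (p * t ^ (p - 2)) *
          ∫⁻ y, {y | ENNReal.ofReal t < 4 * g y}.indicator g y ∂μ := by
        rw [← lintegral_const_mul' _ _ (by simp [K])]
        exact setLIntegral_mono' measurableSet_Ioi hstep
    _ ≤ K * (ENNReal.ofReal (p / (p - 1)) *
          ∫⁻ y, A (4 * g y) * (4 * g y) ^ (p - 1) * g y ∂μ) := by
        gcongr
        exact setLIntegral_mul_lintegral_indicator_le hA hp hg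
          ((ae_lt_top hg hfin).mono fun _ => ne_of_lt) (by norm_num)
    _ ≤ K * ENNReal.ofReal (p / (p - 1)) * ∫⁻ y, A (4 * g y) * (4 * g y) ^ p ∂μ := by
        rw [mul_assoc]
        refine mul_le_mul_right (mul_le_mul_right (lintegral_mono fun y => ?_) _) _
        rw [mul_assoc]
        exact mul_le_mul_right
          (ENNReal.rpow_sub_one_mul_le_rpow (le_mul_of_one_le_left' (by norm_num)) hp.le) _

end HaarMeasure

section Cube

variable {n : ℕ}

lemma measurableSet_cube (c : EuclideanSpace ℝ (Fin n)) (s : ℝ) : MeasurableSet (cube c s) := by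
  rw [cube, ofPred_forall]
  exact MeasurableSet.iInter fun i => measurableSet_le (by fun_prop) measurable_const

lemma closedBall_subset_cube (c : EuclideanSpace ℝ (Fin n)) (s : ℝ) :
    closedBall c s ⊆ cube c s := fun y hy i =>
  calc |y i - c i| = ‖(y - c) i‖ := rfl
    _ ≤ ‖y - c‖ := PiLp.norm_apply_le _ i
    _ ≤ s := mem_closedBall_iff_norm.1 hy

lemma cube_subset_closedBall (c : EuclideanSpace ℝ (Fin n)) {s : ℝ} (hs : 0 ≤ s) :
    cube c s ⊆ closedBall c (√n * s) := by
  intro y hy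
  rw [mem_closedBall, EuclideanSpace.dist_eq, ← Real.sqrt_sq hs, ← Real.sqrt_mul (by positivity)]
  refine Real.sqrt_le_sqrt ?_
  calc ∑ i, dist (y i) (c i) ^ 2 ≤ ∑ _i : Fin n, s ^ 2 := by
        gcongr with i
        rw [Real.dist_eq]
        exact hy i
    _ = n * s ^ 2 := by simp

lemma maxOp_le_mul_ballMaximal (hn : 0 < n) (Ω : Set (EuclideanSpace ℝ (Fin n)))
    (h : EuclideanSpace ℝ (Fin n) → ℝ≥0∞) (x : EuclideanSpace ℝ (Fin n)) :
    maxOp Ω h x ≤ ENNReal.ofReal ((3 * √n) ^ n) * ballMaximal volume (Ω.indicator h) x := by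
  refine iSup_le fun z => iSup_le fun s => iSup_le fun hs => iSup_le fun hx => iSup_le fun hΩ => ?_
  have hsn : 0 < √n * s := mul_pos (Real.sqrt_pos.2 (Nat.cast_pos.2 hn)) hs
  obtain ⟨r, hr₂, hr₃⟩ := exists_rat_btwn (by linarith : 2 * (√n * s) < 3 * (√n * s))
  have hr : (0 : ℝ) < r := by linarith
  have hcube : cube z s ⊆ closedBall x r := fun y hy => by
    have hxz := cube_subset_closedBall z hs.le hx
    have hyz := cube_subset_closedBall z hs.le hy
    rw [mem_closedBall] at hxz hyz ⊢
    linarith [dist_triangle_right y x z]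
  set I := ∫⁻ y in closedBall x r, Ω.indicator h y
  have hI : ∫⁻ y in cube z s, h y ≤ I :=
    calc ∫⁻ y in cube z s, h y = ∫⁻ y in cube z s, Ω.indicator h y :=
          setLIntegral_congr_fun (measurableSet_cube z s) fun y hy =>
            (indicator_of_mem (hΩ hy) h).symm
      _ ≤ I := lintegral_mono_set hcube
  have hvol : volume (closedBall x r) ≤ ENNReal.ofReal ((3 * √n) ^ n) * volume (cube z s) := by
    calc volume (closedBall x r) ≤ volume (closedBall x ((3 * √n) * s)) :=
          measure_mono (closedBall_subset_closedBall (by linarith))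
      _ = ENNReal.ofReal ((3 * √n) ^ n) * volume (closedBall z s) := by
          rw [measure_closedBall_mul x z (by positivity) hs.le, finrank_euclideanSpace_fin]
      _ ≤ _ := mul_le_mul_right (measure_mono (closedBall_subset_cube z s)) _
  have hB0 : volume (closedBall x r) ≠ 0 := (measure_closedBall_pos volume x hr).ne'
  refine ENNReal.div_le_of_le_mul (hI.trans ?_)
  calc I = I / volume (closedBall x r) * volume (closedBall x r) :=
        (ENNReal.div_mul_cancel hB0 measure_closedBall_lt_top.ne).symm
    _ ≤ ballMaximal volume (Ω.indicator h) x *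
          (ENNReal.ofReal ((3 * √n) ^ n) * volume (cube z s)) :=
        mul_le_mul' (le_iSup₂_of_le r (by exact_mod_cast hr) le_rfl) hvol
    _ = _ := by ring

theorem setLIntegral_maxOp_mul_rpow_le (hn : 0 < n) {A : ℝ≥0∞ → ℝ≥0∞} (hA : Monotone A)
    {p : ℝ} (hp : 1 < p) {Ω : Set (EuclideanSpace ℝ (Fin n))} (hΩ : MeasurableSet Ω)
    {h : EuclideanSpace ℝ (Fin n) → ℝ≥0∞} (hh : Measurable h) (hint : ∫⁻ x in Ω, h x ≠ ⊤) :
    ∫⁻ x in Ω, A (maxOp Ω h x) * maxOp Ω h x ^ p ≤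
      4 ^ (n + 1) * ENNReal.ofReal (p / (p - 1)) *
        ∫⁻ x in Ω, A (4 * ENNReal.ofReal ((3 * √n) ^ n) * h x) *
          (4 * ENNReal.ofReal ((3 * √n) ^ n) * h x) ^ p := by
  have : Nonempty (Fin n) := ⟨⟨0, hn⟩⟩
  set K := ENNReal.ofReal ((3 * √n) ^ n)
  have hhΩ : Measurable (Ω.indicator h) := hh.indicator hΩ
  set g := fun y => K * Ω.indicator h y
  have hgfin : ∫⁻ y, g y ≠ ⊤ := by
    rw [lintegral_const_mul _ hhΩ, lintegral_indicator hΩ]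
    exact ENNReal.mul_ne_top ENNReal.ofReal_ne_top hint
  have hΦ := hA.mul_rpow (p := p) (by linarith)
  have hΦg : ∀ y, A (4 * g y) * (4 * g y) ^ p =
      Ω.indicator (fun y => A (4 * K * h y) * (4 * K * h y) ^ p) y := fun y => by
    by_cases hy : y ∈ Ω
    · simp [g, hy, mul_assoc]
    · simp [g, hy, ENNReal.zero_rpow_of_pos (by linarith : 0 < p)]
  calc ∫⁻ x in Ω, A (maxOp Ω h x) * maxOp Ω h x ^ p
      ≤ ∫⁻ x, A (ballMaximal volume g x) * ballMaximal volume g x ^ p :=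
        (lintegral_mono fun x => hΦ <| (maxOp_le_mul_ballMaximal hn Ω h x).trans_eq
          (ballMaximal_const_mul hhΩ K x).symm).trans (setLIntegral_le_lintegral _ _)
    _ ≤ 4 ^ (n + 1) * ENNReal.ofReal (p / (p - 1)) * ∫⁻ y, A (4 * g y) * (4 * g y) ^ p := by
        simpa only [finrank_euclideanSpace_fin] using
          lintegral_ballMaximal_mul_rpow_le hA hp (hhΩ.const_mul K) hgfin
    _ = _ := by rw [lintegral_congr hΦg, lintegral_indicator hΩ]

end Cube

theorem stmt_12 (n : ℕ) (hn : 0 < n) (p : ℝ) (hp : 1 < p) :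
    ∃ C : ENNReal, 0 < C ∧ C ≠ ⊤ ∧
      ∀ (c : EuclideanSpace ℝ (Fin n)) (R : ℝ), 0 < R →
      ∀ A : ENNReal → ENNReal, Monotone A →
      ∀ h : EuclideanSpace ℝ (Fin n) → ENNReal, Measurable h →
        (∫⁻ x in cube c R, h x) ≠ ⊤ →
        ∫⁻ x in cube c R, A (maxOp (cube c R) h x) * (maxOp (cube c R) h x) ^ p ≤
          C * ∫⁻ x in cube c R, A (C * h x) * (C * h x) ^ p := by
  set K := ENNReal.ofReal ((3 * √n) ^ n)
  set c₀ : ℝ≥0∞ := 4 ^ (n + 1) * ENNReal.ofReal (p / (p - 1))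
  have hc₀ : 0 < c₀ := ENNReal.mul_pos (pow_ne_zero _ (by norm_num))
    (ENNReal.ofReal_pos.2 (div_pos (by linarith) (by linarith))).ne'
  refine ⟨max (4 * K) c₀, lt_max_of_lt_right hc₀, (max_lt (ENNReal.mul_lt_top (by simp)
    ENNReal.ofReal_lt_top) (ENNReal.mul_lt_top (by simp) ENNReal.ofReal_lt_top)).ne, ?_⟩
  intro c R _ A hA h hh hint
  have hΦ := hA.mul_rpow (p := p) (by linarith)
  calc ∫⁻ x in cube c R, A (maxOp (cube c R) h x) * maxOp (cube c R) h x ^ p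
      ≤ c₀ * ∫⁻ x in cube c R, A (4 * K * h x) * (4 * K * h x) ^ p :=
        setLIntegral_maxOp_mul_rpow_le hn hA hp (measurableSet_cube c R) hh hint
    _ ≤ max (4 * K) c₀ *
          ∫⁻ x in cube c R, A (max (4 * K) c₀ * h x) * (max (4 * K) c₀ * h x) ^ p :=
        mul_le_mul' (le_max_right _ _)
          (lintegral_mono fun x => hΦ (mul_le_mul_left (le_max_left _ _) _))
end
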